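/- arXiv:math/0607551 — 4 statements merged into one kernel-verified Lean document; each statement's English description precedes it below -/
import Mathlib

section
/- (Schur convexity property, finite dimensions.) Let μ = (μ₁,…,μₙ) ∈ ℝⁿ with μ₁ ≥ μ₂ ≥ … ≥ μₙ, and define φ(X) = Σ_{i=1}^n μ_i λ_i(X) for X ∈ Sⁿ. Then φ is sublinear: φ(X + Y) ≤ φ(X) + φ(Y) for all X, Y ∈ Sⁿ, and φ(αX) = α·φ(X) for all X ∈ Sⁿ and all real α ≥ 0. -/
open Matrix
/-- `lam` is the nonincreasing list of eigenvalues (with multiplicity) of the real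
symmetric matrix `X`: `lam` is nonincreasing and `X` is orthogonally similar to
`diag lam`. -/
def IsSortedEigs (n : ℕ) (X : Matrix (Fin n) (Fin n) ℝ) (lam : Fin n → ℝ) : Prop :=
  Antitone lam ∧
    ∃ U : Matrix (Fin n) (Fin n) ℝ, Uᵀ * U = 1 ∧ X = U * Matrix.diagonal lam * Uᵀ

open Finset in
private lemma tele_sum (n : ℕ) (f : ℕ → ℝ) (hfn : f n = 0) {i : ℕ} (hi : i < n) :
    (∑ k ∈ Finset.range n, if i ≤ k then f k - f (k+1) else 0) = f i := by
  rw [← Finset.sum_filter]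
  have h : Finset.filter (fun k => i ≤ k) (Finset.range n) = Finset.Ico i n := by
    ext x; simp [Finset.mem_Ico, and_comm]
  rw [h, Finset.sum_Ico_eq_sub _ (le_of_lt hi), Finset.sum_range_sub', Finset.sum_range_sub',
    hfn]
  ring

open Finset in
private lemma abel_step (n : ℕ) (h e : ℕ → ℝ)
    (hh : ∀ i, i < n → h i = ∑ k ∈ range n, if i ≤ k then e k else 0) (w : ℕ → ℝ) :
    ∑ i ∈ range n, w i * h i = ∑ k ∈ range n, e k * ∑ i ∈ range (k+1), w i := by
  calc ∑ i ∈ range n, w i * h i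
      = ∑ i ∈ range n, ∑ k ∈ range n, (if i ≤ k then w i * e k else 0) := by
        refine Finset.sum_congr rfl fun i hi => ?_
        rw [hh i (mem_range.mp hi), Finset.mul_sum]
        refine Finset.sum_congr rfl fun k _ => ?_
        split_ifs <;> ring
    _ = ∑ k ∈ range n, ∑ i ∈ range n, (if i ≤ k then w i * e k else 0) := Finset.sum_comm
    _ = ∑ k ∈ range n, e k * ∑ i ∈ range (k+1), w i := by
        refine Finset.sum_congr rfl fun k hk => ?_
        rw [← Finset.sum_filter]
        have hfil : filter (fun i => i ≤ k) (range n) = range (k+1) := by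
          ext x
          simp only [mem_filter, mem_range, Nat.lt_succ_iff]
          exact ⟨fun h => h.2, fun h => ⟨lt_of_le_of_lt h (mem_range.mp hk), h⟩⟩
        rw [hfil, Finset.mul_sum]
        exact Finset.sum_congr rfl fun i _ => mul_comm _ _

open Finset in
private lemma abel_bound (n m : ℕ) (g : ℕ → ℝ) (hg : ∀ l, l+1 < n → g (l+1) ≤ g l) (hgn : g n = 0)
    (t : ℕ → ℝ) (ht0 : ∀ j, j < n → 0 ≤ t j) (ht1 : ∀ j, j < n → t j ≤ 1)
    (hm : m ≤ n) (htot : ∑ j ∈ range n, t j = m) :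
    ∑ j ∈ range n, t j * g j ≤ ∑ j ∈ range m, g j := by
  set d : ℕ → ℝ := fun l => g l - g (l+1) with hd
  have hh : ∀ j, j < n → g j = ∑ l ∈ range n, if j ≤ l then d l else 0 := fun j hj =>
    (tele_sum n g hgn hj).symm
  have h1 : ∑ j ∈ range n, t j * g j = ∑ l ∈ range n, d l * ∑ j ∈ range (l+1), t j :=
    abel_step n g d hh t
  have hfil : ∀ r : ℕ, filter (fun j => j < m) (range r) = range (min m r) := by
    intro r; ext x; simp only [mem_filter, mem_range, lt_min_iff]; omega
  have h2 : ∑ j ∈ range m, g j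
      = ∑ l ∈ range n, d l * ∑ j ∈ range (l+1), (if j < m then (1:ℝ) else 0) := by
    rw [← abel_step n g d hh (fun j => if j < m then (1:ℝ) else 0)]
    simp only [ite_mul, one_mul, zero_mul]
    rw [← Finset.sum_filter, hfil, min_eq_left hm]
  rw [h1, h2]
  apply Finset.sum_le_sum
  intro l hl
  have hln : l < n := mem_range.mp hl
  have hones : ∑ j ∈ range (l+1), (if j < m then (1:ℝ) else 0) = (min m (l+1) : ℕ) := by
    rw [Finset.sum_boole, hfil, Finset.card_range]
  by_cases hcase : l + 1 = n
  · have : ∑ j ∈ range (l+1), t j = ∑ j ∈ range (l+1), (if j < m then (1:ℝ) else 0) := by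
      rw [hones, hcase, htot, min_eq_left (by omega)]
    rw [this]
  · have hdl : 0 ≤ d l := sub_nonneg.mpr (hg l (by omega))
    refine mul_le_mul_of_nonneg_left ?_ hdl
    rw [hones]
    by_cases hml : m ≤ l + 1
    · rw [min_eq_left hml, ← htot]
      exact Finset.sum_le_sum_of_subset_of_nonneg (Finset.range_subset_range.mpr (by omega))
        (fun j hj _ => ht0 j (mem_range.mp hj))
    · rw [min_eq_right (by omega)]
      calc ∑ j ∈ range (l+1), t j ≤ ∑ _j ∈ range (l+1), (1:ℝ) :=
            Finset.sum_le_sum fun j hj => ht1 j (by have := mem_range.mp hj; omega)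
        _ = (l+1 : ℕ) := by simp

open Finset in
private lemma ds_sum (n : ℕ) (S : ℕ → ℕ → ℝ) (f g : ℕ → ℝ)
    (hS : ∀ i j, i < n → j < n → 0 ≤ S i j)
    (hrow : ∀ i, i < n → ∑ j ∈ range n, S i j = 1)
    (hcol : ∀ j, j < n → ∑ i ∈ range n, S i j = 1)
    (hf : ∀ k, k + 1 < n → f (k+1) ≤ f k) (hfn : f n = 0)
    (hg : ∀ l, l + 1 < n → g (l+1) ≤ g l) (hgn : g n = 0) :
    ∑ i ∈ range n, ∑ j ∈ range n, S i j * (f i * g j) ≤ ∑ i ∈ range n, f i * g i := by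
  set c : ℕ → ℝ := fun k => f k - f (k+1) with hc
  have hh : ∀ i, i < n → f i = ∑ k ∈ range n, if i ≤ k then c k else 0 := fun i hi =>
    (tele_sum n f hfn hi).symm
  have h1 : ∑ i ∈ range n, ∑ j ∈ range n, S i j * (f i * g j)
      = ∑ k ∈ range n, c k * ∑ i ∈ range (k+1), ∑ j ∈ range n, S i j * g j := by
    rw [← abel_step n f c hh (fun i => ∑ j ∈ range n, S i j * g j)]
    refine Finset.sum_congr rfl fun i _ => ?_
    rw [Finset.sum_mul]
    exact Finset.sum_congr rfl fun j _ => by ring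
  have h2 : ∑ i ∈ range n, f i * g i
      = ∑ k ∈ range n, c k * ∑ i ∈ range (k+1), g i := by
    rw [← abel_step n f c hh g]
    exact Finset.sum_congr rfl fun i _ => mul_comm _ _
  rw [h1, h2]
  apply Finset.sum_le_sum
  intro k hk
  have hkn : k < n := mem_range.mp hk
  have hswap : ∀ r : ℕ, r ≤ n → ∑ i ∈ range r, ∑ j ∈ range n, S i j * g j
      = ∑ j ∈ range n, (∑ i ∈ range r, S i j) * g j := by
    intro r _
    rw [Finset.sum_comm]
    exact Finset.sum_congr rfl fun j _ => by rw [Finset.sum_mul]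
  by_cases hcase : k + 1 = n
  · have : ∑ i ∈ range (k+1), ∑ j ∈ range n, S i j * g j = ∑ i ∈ range (k+1), g i := by
      rw [hswap (k+1) (by omega), hcase]
      exact Finset.sum_congr rfl fun j hj => by
        rw [hcol j (mem_range.mp hj), one_mul]
    rw [this]
  · have hck : 0 ≤ c k := sub_nonneg.mpr (hf k (by omega))
    refine mul_le_mul_of_nonneg_left ?_ hck
    rw [hswap (k+1) (by omega)]
    refine abel_bound n (k+1) g hg hgn (fun j => ∑ i ∈ range (k+1), S i j)
      (fun j hj => Finset.sum_nonneg fun i hi => hS i j (by have := mem_range.mp hi; omega) hj)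
      (fun j hj => ?_) (by omega) ?_
    · rw [← hcol j hj]
      exact Finset.sum_le_sum_of_subset_of_nonneg (Finset.range_subset_range.mpr (by omega))
        (fun i hi _ => hS i j (mem_range.mp hi) hj)
    · rw [Finset.sum_comm]
      have : ∀ i ∈ range (k+1), ∑ j ∈ range n, S i j = 1 := fun i hi =>
        hrow i (by have := mem_range.mp hi; omega)
      rw [Finset.sum_congr rfl this, Finset.sum_const, Finset.card_range]
      push_cast
      ring

open Finset in
private lemma ds_fin (n : ℕ) (S : Fin n → Fin n → ℝ) (hS : ∀ i j, 0 ≤ S i j)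
    (hrow : ∀ i, ∑ j, S i j = 1) (hcol : ∀ j, ∑ i, S i j = 1)
    (μ lam : Fin n → ℝ) (hμ : Antitone μ) (hlam : Antitone lam) :
    ∑ i, ∑ j, S i j * (μ i * lam j) ≤ ∑ i, μ i * lam i := by
  set S' : ℕ → ℕ → ℝ := fun i j =>
    if h : i < n ∧ j < n then S ⟨i, h.1⟩ ⟨j, h.2⟩ else 0 with hS'
  set f : ℕ → ℝ := fun i => if h : i < n then μ ⟨i, h⟩ else 0 with hf'
  set g : ℕ → ℝ := fun j => if h : j < n then lam ⟨j, h⟩ else 0 with hg'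
  have key := ds_sum n S' f g
    (fun i j hi hj => by simp only [hS', dif_pos (And.intro hi hj)]; exact hS _ _)
    (fun i hi => by
      rw [← Fin.sum_univ_eq_sum_range (fun j => S' i j) n, ← hrow ⟨i, hi⟩]
      exact Finset.sum_congr rfl fun j _ => by
        simp only [hS', dif_pos (And.intro hi j.isLt)])
    (fun j hj => by
      rw [← Fin.sum_univ_eq_sum_range (fun i => S' i j) n, ← hcol ⟨j, hj⟩]
      exact Finset.sum_congr rfl fun i _ => by
        simp only [hS', dif_pos (And.intro i.isLt hj)])
    (fun k hk => by
      simp only [hf', dif_pos hk, dif_pos (Nat.lt_of_succ_lt hk)]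
      exact hμ (by simp [Fin.le_def]))
    (by simp [hf'])
    (fun l hl => by
      simp only [hg', dif_pos hl, dif_pos (Nat.lt_of_succ_lt hl)]
      exact hlam (by simp [Fin.le_def]))
    (by simp [hg'])
  calc ∑ i, ∑ j, S i j * (μ i * lam j)
      = ∑ i ∈ range n, ∑ j ∈ range n, S' i j * (f i * g j) := by
        rw [← Fin.sum_univ_eq_sum_range (fun i => ∑ j ∈ range n, S' i j * (f i * g j)) n]
        refine Finset.sum_congr rfl fun i _ => ?_
        rw [← Fin.sum_univ_eq_sum_range (fun j => S' i j * (f i * g j)) n]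
        refine Finset.sum_congr rfl fun j _ => ?_
        simp only [hS', hf', hg', dif_pos (And.intro i.isLt j.isLt), dif_pos i.isLt,
          dif_pos j.isLt]
    _ ≤ ∑ i ∈ range n, f i * g i := key
    _ = ∑ i, μ i * lam i := by
        rw [← Fin.sum_univ_eq_sum_range (fun i => f i * g i) n]
        exact Finset.sum_congr rfl fun i _ => by
          simp only [hf', hg', dif_pos i.isLt]

open Finset in
private lemma key_ineq (n : ℕ) (X : Matrix (Fin n) (Fin n) ℝ) (lam μ : Fin n → ℝ)
    (hX : IsSortedEigs n X lam) (hμ : Antitone μ)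
    (W : Matrix (Fin n) (Fin n) ℝ) (hW : Wᵀ * W = 1) :
    ∑ i, μ i * (Wᵀ * X * W) i i ≤ ∑ i, μ i * lam i := by
  obtain ⟨hlam, V, hV, hXe⟩ := hX
  have hV' : V * Vᵀ = 1 := mul_eq_one_comm.mp hV
  set A := Vᵀ * W with hA
  have hAo : Aᵀ * A = 1 := by
    rw [hA, transpose_mul, transpose_transpose, Matrix.mul_assoc,
      ← Matrix.mul_assoc V Vᵀ W, hV', Matrix.one_mul, hW]
  have hAo' : A * Aᵀ = 1 := mul_eq_one_comm.mp hAo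
  have hrewr : Wᵀ * X * W = Aᵀ * diagonal lam * A := by
    rw [hXe, hA, transpose_mul, transpose_transpose]
    simp only [Matrix.mul_assoc]
  set Sm : Fin n → Fin n → ℝ := fun i j => A j i * A j i with hSm
  have hentry : ∀ i, (Wᵀ * X * W) i i = ∑ j, Sm i j * lam j := by
    intro i
    rw [hrewr, Matrix.mul_apply]
    refine Finset.sum_congr rfl fun j _ => ?_
    rw [Matrix.mul_diagonal, transpose_apply]
    ring
  have hSrow : ∀ i, ∑ j, Sm i j = 1 := by
    intro i
    have := congrArg (fun M => M i i) hAo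
    simpa [Matrix.mul_apply, transpose_apply, Matrix.one_apply, hSm] using this
  have hScol : ∀ j, ∑ i, Sm i j = 1 := by
    intro j
    have := congrArg (fun M => M j j) hAo'
    simpa [Matrix.mul_apply, transpose_apply, Matrix.one_apply, hSm] using this
  calc ∑ i, μ i * (Wᵀ * X * W) i i
      = ∑ i, ∑ j, Sm i j * (μ i * lam j) := by
        refine Finset.sum_congr rfl fun i _ => ?_
        rw [hentry i, Finset.mul_sum]
        exact Finset.sum_congr rfl fun j _ => by ring
    _ ≤ ∑ i, μ i * lam i :=
        ds_fin n Sm (fun i j => mul_self_nonneg _) hSrow hScol μ lam hμ hlam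
open Finset in
private lemma diag_recover (n : ℕ) (M U : Matrix (Fin n) (Fin n) ℝ) (lam : Fin n → ℝ)
    (hU : Uᵀ * U = 1) (hM : M = U * Matrix.diagonal lam * Uᵀ) :
    Uᵀ * M * U = Matrix.diagonal lam := by
  have hU' : U * Uᵀ = 1 := mul_eq_one_comm.mp hU
  rw [hM]
  calc Uᵀ * (U * diagonal lam * Uᵀ) * U
      = (Uᵀ * U) * diagonal lam * (Uᵀ * U) := by
        simp only [Matrix.mul_assoc]
    _ = diagonal lam := by rw [hU, Matrix.one_mul, Matrix.mul_one]

/-- (Schur convexity property, finite dimensions.) If `μ₁ ≥ μ₂ ≥ … ≥ μₙ`, then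
`φ(X) = ∑ μ_i λ_i(X)` is sublinear on symmetric matrices: subadditive, and
positively homogeneous. -/
theorem schur_convexity_sublinear (n : ℕ) (μ : Fin n → ℝ) (hμ : Antitone μ) :
    (∀ X Y : Matrix (Fin n) (Fin n) ℝ, Xᵀ = X → Yᵀ = Y →
      ∀ lamX lamY lamXY : Fin n → ℝ,
        IsSortedEigs n X lamX → IsSortedEigs n Y lamY → IsSortedEigs n (X + Y) lamXY →
        ∑ i, μ i * lamXY i ≤ (∑ i, μ i * lamX i) + ∑ i, μ i * lamY i) ∧
    (∀ (α : ℝ), 0 ≤ α → ∀ X : Matrix (Fin n) (Fin n) ℝ, Xᵀ = X →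
      ∀ lamX lamαX : Fin n → ℝ,
        IsSortedEigs n X lamX → IsSortedEigs n (α • X) lamαX →
        ∑ i, μ i * lamαX i = α * ∑ i, μ i * lamX i) := by
  constructor
  · intro X Y _ _ lamX lamY lamXY hX hY hXY
    obtain ⟨hlamXY, U, hU, hXYe⟩ := hXY
    have hdiag := diag_recover n (X + Y) U lamXY hU hXYe
    have h1 : ∑ i, μ i * lamXY i = ∑ i, μ i * (Uᵀ * (X + Y) * U) i i := by
      rw [hdiag]
      exact Finset.sum_congr rfl fun i _ => by rw [Matrix.diagonal_apply_eq]
    have h2 : ∀ i, (Uᵀ * (X + Y) * U) i i = (Uᵀ * X * U) i i + (Uᵀ * Y * U) i i := by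
      intro i
      rw [Matrix.mul_add, Matrix.add_mul]
      rfl
    calc ∑ i, μ i * lamXY i
        = (∑ i, μ i * (Uᵀ * X * U) i i) + ∑ i, μ i * (Uᵀ * Y * U) i i := by
          rw [h1, ← Finset.sum_add_distrib]
          exact Finset.sum_congr rfl fun i _ => by rw [h2 i]; ring
      _ ≤ (∑ i, μ i * lamX i) + ∑ i, μ i * lamY i :=
          add_le_add (key_ineq n X lamX μ hX hμ U hU) (key_ineq n Y lamY μ hY hμ U hU)
  · intro α hα X _ lamX lamαX hX hαX
    obtain ⟨hlamX, V, hV, hXe⟩ := hX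
    obtain ⟨hlamαX, U, hU, hαXe⟩ := hαX
    apply le_antisymm
    · -- ∑ μ lamαX = ∑ μ (Uᵀ(αX)U)ii = α ∑ μ (UᵀXU)ii ≤ α ∑ μ lamX
      have hdiag := diag_recover n (α • X) U lamαX hU hαXe
      have h1 : ∑ i, μ i * lamαX i = α * ∑ i, μ i * (Uᵀ * X * U) i i := by
        rw [Finset.mul_sum]
        refine Finset.sum_congr rfl fun i _ => ?_
        have : lamαX i = (Uᵀ * (α • X) * U) i i := by rw [hdiag, Matrix.diagonal_apply_eq]
        rw [this]
        have h3 : Uᵀ * (α • X) * U = α • (Uᵀ * X * U) := by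
          rw [Matrix.mul_smul, Matrix.smul_mul]
        rw [h3, Matrix.smul_apply, smul_eq_mul]
        ring
      rw [h1]
      exact mul_le_mul_of_nonneg_left
        (key_ineq n X lamX μ ⟨hlamX, V, hV, hXe⟩ hμ U hU) hα
    · -- α ∑ μ lamX = ∑ μ (Vᵀ(αX)V)ii ≤ ∑ μ lamαX
      have hdiag := diag_recover n X V lamX hV hXe
      have h1 : α * ∑ i, μ i * lamX i = ∑ i, μ i * (Vᵀ * (α • X) * V) i i := by
        rw [Finset.mul_sum]
        refine Finset.sum_congr rfl fun i _ => ?_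
        have h3 : Vᵀ * (α • X) * V = α • (Vᵀ * X * V) := by
          rw [Matrix.mul_smul, Matrix.smul_mul]
        rw [h3, Matrix.smul_apply, hdiag, Matrix.diagonal_apply_eq, smul_eq_mul]
        ring
      rw [h1]
      exact key_ineq n (α • X) lamαX μ ⟨hlamαX, U, hU, hαXe⟩ hμ V hV
end

section
/- (Ky Fan's maximum principle.) For every X ∈ Sⁿ and every 1 ≤ k ≤ n, λ₁(X) + λ₂(X) + … + λ_k(X) = sup{ tr(A Aᵀ X) : A is a real n×k matrix with Aᵀ A = I_k }, and the supremum is attained by some A with Aᵀ A = I_k. -/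
open Matrix

/-!
Write `X = U diag(λ) Uᵀ` with `U` orthogonal. For `A` with orthonormal columns, `B = Uᵀ A`
again has orthonormal columns, so `P = B Bᵀ` is a symmetric idempotent of trace `k`: its
diagonal entries lie in `[0, 1]` and sum to `k`. Since `tr (A Aᵀ X) = ∑ᵢ λᵢ Pᵢᵢ` and `λ` is
nonincreasing, such a weighting is at most `λ₁ + ⋯ + λ_k`, with equality when `A` is `U`
applied to the first `k` standard basis vectors.
-/

open Finset

theorem sum_mul_le_sum_of_threshold {ι R : Type*} [Fintype ι] [DecidableEq ι] [CommRing R]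
    [LinearOrder R] [IsStrictOrderedRing R] (S : Finset ι) (lam d : ι → R) (c : R)
    (hS : ∀ i ∈ S, c ≤ lam i) (hSc : ∀ i ∉ S, lam i ≤ c)
    (hd0 : ∀ i, 0 ≤ d i) (hd1 : ∀ i, d i ≤ 1) (hsum : ∑ i, d i = #S) :
    ∑ i, lam i * d i ≤ ∑ i ∈ S, lam i := by
  have hin : ∑ i ∈ S, (lam i - c) * d i ≤ ∑ i ∈ S, (lam i - c) :=
    sum_le_sum fun i hi => mul_le_of_le_one_right (sub_nonneg.2 (hS i hi)) (hd1 i)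
  have hout : ∑ i ∈ Sᶜ, (lam i - c) * d i ≤ 0 :=
    sum_nonpos fun i hi => mul_nonpos_of_nonpos_of_nonneg
      (sub_nonpos.2 (hSc i (mem_compl.1 hi))) (hd0 i)
  calc ∑ i, lam i * d i = ∑ i, (lam i - c) * d i + c * #S := by
        simp only [sub_mul, sum_sub_distrib, ← mul_sum, hsum, sub_add_cancel]
    _ = ∑ i ∈ S, (lam i - c) * d i + ∑ i ∈ Sᶜ, (lam i - c) * d i + c * #S := by
        rw [sum_add_sum_compl]
    _ ≤ ∑ i ∈ S, (lam i - c) + c * #S := by linarith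
    _ = ∑ i ∈ S, lam i := by simp [sum_sub_distrib, mul_comm]

namespace Matrix

variable {l m R : Type*}

theorem isIdempotentElem_mul_transpose [Fintype l] [Fintype m] [DecidableEq l] [CommSemiring R]
    {B : Matrix m l R} (hB : Bᵀ * B = 1) : IsIdempotentElem (B * Bᵀ) := by
  rw [IsIdempotentElem, Matrix.mul_assoc, ← Matrix.mul_assoc Bᵀ, hB, Matrix.one_mul]

theorem trace_mul_transpose [Fintype l] [Fintype m] [DecidableEq l] [CommSemiring R]
    {B : Matrix m l R} (hB : Bᵀ * B = 1) : trace (B * Bᵀ) = Fintype.card l := by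
  rw [trace_mul_comm, hB, trace_one]

theorem trace_transpose_mul_diagonal_mul [Fintype l] [Fintype m] [DecidableEq m] [CommSemiring R]
    (B : Matrix m l R) (d : m → R) : trace (Bᵀ * diagonal d * B) = ∑ i, d i * (B * Bᵀ) i i := by
  rw [trace_mul_comm, ← Matrix.mul_assoc]
  simp [trace, mul_comm]

theorem transpose_mul_mul_submatrix_one [Fintype m] [DecidableEq m] [CommSemiring R]
    (M : Matrix m m R) (e : l → m) :
    ((1 : Matrix m m R).submatrix id e)ᵀ * M * (1 : Matrix m m R).submatrix id e
      = M.submatrix e e := by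
  ext i j
  simp [mul_apply, one_apply]

variable [CommRing R] [LinearOrder R] [IsStrictOrderedRing R]

theorem diag_mul_transpose_self_nonneg [Fintype l] (B : Matrix m l R) (i : m) :
    0 ≤ (B * Bᵀ) i i :=
  sum_nonneg fun j _ => mul_self_nonneg (B i j)

theorem diag_le_one_of_isIdempotentElem [Fintype m] {P : Matrix m m R} (hsymm : Pᵀ = P)
    (hidem : IsIdempotentElem P) (i : m) : P i i ≤ 1 := by
  have hP : P * Pᵀ = P := by rw [hsymm, hidem.eq]
  have hsq : P i i * P i i ≤ P i i :=
    calc P i i * P i i ≤ ∑ j, P i j * P i j :=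
          single_le_sum (f := fun j => P i j * P i j) (fun j _ => mul_self_nonneg _) (mem_univ i)
      _ = P i i := congrFun (congrFun hP i) i
  have hnonneg : 0 ≤ P i i := hP ▸ diag_mul_transpose_self_nonneg P i
  nlinarith

end Matrix

theorem Fin.sum_castLE_eq_sum_filter_val_lt {M : Type*} [AddCommMonoid M] {n k : ℕ}
    (hkn : k ≤ n) (f : Fin n → M) :
    ∑ j : Fin k, f (Fin.castLE hkn j) = ∑ i ∈ univ.filter (fun i : Fin n => (i : ℕ) < k), f i := by
  refine sum_bij (fun j _ => Fin.castLE hkn j) (by simp)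
    (fun _ _ _ _ h => Fin.castLE_injective hkn h) (fun i hi => ?_) (by simp)
  exact ⟨⟨i, by simpa using hi⟩, mem_univ _, rfl⟩

theorem trace_castLE_transpose_mul_diagonal_mul {R : Type*} [CommSemiring R] {n k : ℕ}
    (hkn : k ≤ n) (lam : Fin n → R) :
    trace (((1 : Matrix (Fin n) (Fin n) R).submatrix id (Fin.castLE hkn))ᵀ * diagonal lam *
      (1 : Matrix (Fin n) (Fin n) R).submatrix id (Fin.castLE hkn))
      = ∑ i ∈ univ.filter (fun i : Fin n => (i : ℕ) < k), lam i := by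
  rw [transpose_mul_mul_submatrix_one, submatrix_diagonal _ _ (Fin.castLE_injective hkn),
    trace_diagonal]
  exact Fin.sum_castLE_eq_sum_filter_val_lt hkn lam

section Antitone

variable {n k : ℕ} {R : Type*} [CommRing R] [LinearOrder R] [IsStrictOrderedRing R]
  {lam : Fin n → R}

theorem Antitone.sum_mul_le_sum_filter_val_lt (hmono : Antitone lam) (hk1 : 1 ≤ k) (hkn : k ≤ n)
    {d : Fin n → R} (hd0 : ∀ i, 0 ≤ d i) (hd1 : ∀ i, d i ≤ 1) (hsum : ∑ i, d i = k) :
    ∑ i, lam i * d i ≤ ∑ i ∈ univ.filter (fun i : Fin n => (i : ℕ) < k), lam i := by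
  refine sum_mul_le_sum_of_threshold _ lam d (lam ⟨k - 1, by omega⟩)
    (fun i hi => hmono ?_) (fun i hi => hmono ?_) hd0 hd1 ?_
  · simp only [mem_filter, mem_univ, true_and] at hi
    exact Fin.le_def.2 (by dsimp only; omega)
  · simp only [mem_filter, mem_univ, true_and, not_lt] at hi
    exact Fin.le_def.2 (by dsimp only; omega)
  · rw [hsum, Fin.card_filter_val_lt, min_eq_right hkn]

theorem Antitone.trace_transpose_mul_diagonal_mul_le (hmono : Antitone lam) (hk1 : 1 ≤ k)
    (hkn : k ≤ n) {B : Matrix (Fin n) (Fin k) R} (hB : Bᵀ * B = 1) :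
    trace (Bᵀ * diagonal lam * B) ≤ ∑ i ∈ univ.filter (fun i : Fin n => (i : ℕ) < k), lam i := by
  rw [trace_transpose_mul_diagonal_mul]
  refine hmono.sum_mul_le_sum_filter_val_lt hk1 hkn (diag_mul_transpose_self_nonneg B)
    (diag_le_one_of_isIdempotentElem ?_ (isIdempotentElem_mul_transpose hB)) ?_
  · rw [transpose_mul, transpose_transpose]
  · exact (trace_mul_transpose hB).trans (by rw [Fintype.card_fin])

end Antitone

theorem ky_fan_maximum_principle_general (n k : ℕ) (hk1 : 1 ≤ k) (hkn : k ≤ n)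
    (X : Matrix (Fin n) (Fin n) ℝ)
    (lam : Fin n → ℝ) (hlam : IsSortedEigs n X lam) :
    IsGreatest {x : ℝ | ∃ A : Matrix (Fin n) (Fin k) ℝ, Aᵀ * A = 1 ∧ x = (A * Aᵀ * X).trace}
      (∑ i ∈ Finset.univ.filter (fun i : Fin n => (i : ℕ) < k), lam i) := by
  obtain ⟨hmono, U, hU, rfl⟩ := hlam
  have htrace (A : Matrix (Fin n) (Fin k) ℝ) : (A * Aᵀ * (U * diagonal lam * Uᵀ)).trace
      = ((Uᵀ * A)ᵀ * diagonal lam * (Uᵀ * A)).trace := by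
    rw [Matrix.mul_assoc, trace_mul_comm]
    simp only [transpose_mul, transpose_transpose, Matrix.mul_assoc]
  set E := (1 : Matrix (Fin n) (Fin n) ℝ).submatrix id (Fin.castLE hkn)
  have hE : Eᵀ * E = 1 := by
    rw [← Matrix.mul_one Eᵀ, transpose_mul_mul_submatrix_one,
      submatrix_one _ (Fin.castLE_injective hkn)]
  have hUE : Uᵀ * (U * E) = E := by rw [← Matrix.mul_assoc, hU, Matrix.one_mul]
  refine ⟨⟨U * E, ?_, ?_⟩, ?_⟩
  · rw [transpose_mul, Matrix.mul_assoc, hUE, hE]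
  · rw [htrace, hUE, trace_castLE_transpose_mul_diagonal_mul]
  · rintro _ ⟨A, hA, rfl⟩
    have hUUt : U * Uᵀ = 1 := mul_eq_one_comm.mp hU
    have hB : (Uᵀ * A)ᵀ * (Uᵀ * A) = 1 := by
      rw [transpose_mul, transpose_transpose, Matrix.mul_assoc, ← Matrix.mul_assoc U, hUUt,
        Matrix.one_mul, hA]
    rw [htrace]
    exact hmono.trace_transpose_mul_diagonal_mul_le hk1 hkn hB

/-- (Ky Fan's maximum principle.) For a symmetric matrix `X` and `1 ≤ k ≤ n`, the sum
of the `k` largest eigenvalues of `X` equals the supremum of `tr(A Aᵀ X)` over real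
`n × k` matrices `A` with `Aᵀ A = I_k`, and the supremum is attained. -/
theorem ky_fan_maximum_principle (n k : ℕ) (hk1 : 1 ≤ k) (hkn : k ≤ n)
    (X : Matrix (Fin n) (Fin n) ℝ) (hX : Xᵀ = X)
    (lam : Fin n → ℝ) (hlam : IsSortedEigs n X lam) :
    IsGreatest {x : ℝ | ∃ A : Matrix (Fin n) (Fin k) ℝ, Aᵀ * A = 1 ∧ x = (A * Aᵀ * X).trace}
      (∑ i ∈ Finset.univ.filter (fun i : Fin n => (i : ℕ) < k), lam i) :=
  ky_fan_maximum_principle_general n k hk1 hkn X lam hlam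
end

section
/- (Davis.) Let Φ : ℝⁿ → ℝ be a convex function that is symmetric, i.e., Φ(x_{σ(1)},…,x_{σ(n)}) = Φ(x₁,…,xₙ) for every permutation σ of {1,…,n} and every x ∈ ℝⁿ. Then the function f : Sⁿ → ℝ defined by f(X) = Φ(λ₁(X),…,λₙ(X)) is convex, and f(Uᵀ X U) = f(X) for every X ∈ Sⁿ and every orthogonal matrix U ∈ M_{n,n}(ℝ). -/
open Matrix

section aux
variable {n : ℕ}

lemma orth_transpose {A : Matrix (Fin n) (Fin n) ℝ} (hA : Aᵀ * A = 1) : (Aᵀ)ᵀ * Aᵀ = 1 := by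
  rw [Matrix.transpose_transpose]; exact mul_eq_one_comm.mp hA

lemma orth_mul {A B : Matrix (Fin n) (Fin n) ℝ} (hA : Aᵀ * A = 1) (hB : Bᵀ * B = 1) :
    (A * B)ᵀ * (A * B) = 1 := by
  rw [Matrix.transpose_mul, Matrix.mul_assoc, ← Matrix.mul_assoc Aᵀ, hA, Matrix.one_mul, hB]

lemma conj_eq {W Z : Matrix (Fin n) (Fin n) ℝ} {D : Matrix (Fin n) (Fin n) ℝ}
    (hW : Wᵀ * W = 1) (h : Z = W * D * Wᵀ) : Wᵀ * Z * W = D := by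
  have hW' : W * Wᵀ = 1 := mul_eq_one_comm.mp hW
  rw [h]
  calc Wᵀ * (W * D * Wᵀ) * W = (Wᵀ * W) * D * (Wᵀ * W) := by
        simp only [Matrix.mul_assoc]
    _ = D := by rw [hW, Matrix.one_mul, Matrix.mul_one]

lemma conj_diag_apply (R : Matrix (Fin n) (Fin n) ℝ) (b : Fin n → ℝ) (i : Fin n) :
    (Rᵀ * Matrix.diagonal b * R) i i = ∑ j, (R j i) ^ 2 * b j := by
  simp [Matrix.mul_apply, Matrix.diagonal_apply, Finset.sum_ite_eq, transpose_apply]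
  congr 1; funext j; ring

lemma permMatrix_mulVec (σ : Equiv.Perm (Fin n)) (x : Fin n → ℝ) :
    (σ.permMatrix ℝ) *ᵥ x = x ∘ σ := by
  funext i
  simp [Matrix.mulVec, dotProduct, Equiv.Perm.permMatrix, PEquiv.toMatrix_apply,
    Equiv.toPEquiv_apply]

lemma schur_ineq (Φ : (Fin n → ℝ) → ℝ) (hconv : ConvexOn ℝ Set.univ Φ)
    (hsym : ∀ (σ : Equiv.Perm (Fin n)) (x : Fin n → ℝ), Φ (x ∘ σ) = Φ x)
    {M : Matrix (Fin n) (Fin n) ℝ} (hM : M ∈ doublyStochastic ℝ (Fin n)) (x : Fin n → ℝ) :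
    Φ (M *ᵥ x) ≤ Φ x := by
  obtain ⟨w, hw0, hw1, hwM⟩ := exists_eq_sum_perm_of_mem_doublyStochastic hM
  have hsum : ∀ (s : Finset (Equiv.Perm (Fin n))) (A : Equiv.Perm (Fin n) → Matrix (Fin n) (Fin n) ℝ),
      (∑ σ ∈ s, A σ) *ᵥ x = ∑ σ ∈ s, (A σ) *ᵥ x := by
    intro s A
    funext j
    simp only [Matrix.mulVec, dotProduct, Matrix.sum_apply, Finset.sum_apply,
      Finset.sum_mul]
    rw [Finset.sum_comm]
  have hMx : M *ᵥ x = ∑ σ : Equiv.Perm (Fin n), w σ • (x ∘ σ) := by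
    rw [← hwM, hsum]
    simp only [Matrix.smul_mulVec, permMatrix_mulVec]
  rw [hMx]
  calc Φ (∑ σ : Equiv.Perm (Fin n), w σ • (x ∘ σ))
      ≤ ∑ σ : Equiv.Perm (Fin n), w σ * Φ (x ∘ σ) :=
        hconv.map_sum_le (fun i _ => hw0 i) hw1 (fun i _ => Set.mem_univ _)
    _ = ∑ σ : Equiv.Perm (Fin n), w σ * Φ x := by simp_rw [hsym]
    _ = Φ x := by rw [← Finset.sum_mul, hw1, one_mul]

/-- Key lemma: diagonal of orthogonal conjugate of `diagonal b` gives `Φ`-value `≤ Φ b`. -/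
lemma conj_le (Φ : (Fin n → ℝ) → ℝ) (hconv : ConvexOn ℝ Set.univ Φ)
    (hsym : ∀ (σ : Equiv.Perm (Fin n)) (x : Fin n → ℝ), Φ (x ∘ σ) = Φ x)
    {R : Matrix (Fin n) (Fin n) ℝ} (hR : Rᵀ * R = 1) (b : Fin n → ℝ) :
    Φ (fun i => (Rᵀ * Matrix.diagonal b * R) i i) ≤ Φ b := by
  have hR' : R * Rᵀ = 1 := mul_eq_one_comm.mp hR
  set M : Matrix (Fin n) (Fin n) ℝ := Matrix.of fun i j => (R j i) ^ 2 with hMdef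
  have hM : M ∈ doublyStochastic ℝ (Fin n) := by
    rw [mem_doublyStochastic_iff_sum]
    refine ⟨fun i j => sq_nonneg _, fun i => ?_, fun j => ?_⟩
    · simp only [hMdef, Matrix.of_apply, sq]
      simpa [Matrix.mul_apply] using congrArg (fun A => A i i) hR
    · simp only [hMdef, Matrix.of_apply, sq]
      simpa [Matrix.mul_apply] using congrArg (fun A => A j j) hR'
  have key : (fun i => (Rᵀ * Matrix.diagonal b * R) i i) = M *ᵥ b := by
    funext i
    rw [conj_diag_apply]
    simp [Matrix.mulVec, dotProduct, hMdef]
  rw [key]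
  exact schur_ineq Φ hconv hsym hM b

lemma conj_le' (Φ : (Fin n → ℝ) → ℝ) (hconv : ConvexOn ℝ Set.univ Φ)
    (hsym : ∀ (σ : Equiv.Perm (Fin n)) (x : Fin n → ℝ), Φ (x ∘ σ) = Φ x)
    {R : Matrix (Fin n) (Fin n) ℝ} (hR : Rᵀ * R = 1) {a b : Fin n → ℝ}
    (h : Matrix.diagonal a = Rᵀ * Matrix.diagonal b * R) : Φ a ≤ Φ b := by
  have : a = fun i => (Rᵀ * Matrix.diagonal b * R) i i := by
    funext i; rw [← h, Matrix.diagonal_apply_eq]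
  rw [this]; exact conj_le Φ hconv hsym hR b

end aux

/-- (Davis.) If `Φ : ℝⁿ → ℝ` is convex and symmetric (invariant under permutation of
coordinates), then `f(X) = Φ(λ₁(X), …, λₙ(X))` is convex on symmetric matrices and
invariant under orthogonal conjugation `X ↦ Uᵀ X U`. -/
theorem davis_convexity (n : ℕ) (Φ : (Fin n → ℝ) → ℝ)
    (hconv : ConvexOn ℝ Set.univ Φ)
    (hsym : ∀ (σ : Equiv.Perm (Fin n)) (x : Fin n → ℝ), Φ (x ∘ σ) = Φ x) :
    (∀ X Y : Matrix (Fin n) (Fin n) ℝ, Xᵀ = X → Yᵀ = Y →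
      ∀ t : ℝ, 0 ≤ t → t ≤ 1 →
      ∀ lamX lamY lamZ : Fin n → ℝ,
        IsSortedEigs n X lamX → IsSortedEigs n Y lamY →
        IsSortedEigs n (t • X + (1 - t) • Y) lamZ →
        Φ lamZ ≤ t * Φ lamX + (1 - t) * Φ lamY) ∧
    (∀ X U : Matrix (Fin n) (Fin n) ℝ, Xᵀ = X → Uᵀ * U = 1 →
      ∀ lamX lamU : Fin n → ℝ,
        IsSortedEigs n X lamX → IsSortedEigs n (Uᵀ * X * U) lamU →
        Φ lamU = Φ lamX) := by
  constructor
  · rintro X Y hXs hYs t ht0 ht1 lamX lamY lamZ ⟨-, U, hU, hXeq⟩ ⟨-, V, hV, hYeq⟩ ⟨-, W, hW, hZeq⟩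
    have hWd : Wᵀ * (t • X + (1 - t) • Y) * W = Matrix.diagonal lamZ := conj_eq hW hZeq
    set a : Fin n → ℝ := fun i => (Wᵀ * X * W) i i with ha
    set b : Fin n → ℝ := fun i => (Wᵀ * Y * W) i i with hb
    have hexp : Wᵀ * (t • X + (1 - t) • Y) * W
        = t • (Wᵀ * X * W) + (1 - t) • (Wᵀ * Y * W) := by
      rw [Matrix.mul_add, Matrix.add_mul, Matrix.mul_smul, Matrix.smul_mul,
        Matrix.mul_smul, Matrix.smul_mul]
    have hZab : lamZ = t • a + (1 - t) • b := by
      funext i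
      have h := congrArg (fun A => A i i) hWd
      simp only [hexp, Matrix.add_apply, Matrix.smul_apply, Matrix.diagonal_apply_eq,
        smul_eq_mul] at h
      simp only [Pi.add_apply, Pi.smul_apply, smul_eq_mul, ha, hb]
      rw [← h]
    have hX' : Wᵀ * X * W = (Uᵀ * W)ᵀ * Matrix.diagonal lamX * (Uᵀ * W) := by
      rw [hXeq]
      simp only [Matrix.transpose_mul, Matrix.transpose_transpose, Matrix.mul_assoc]
    have hY' : Wᵀ * Y * W = (Vᵀ * W)ᵀ * Matrix.diagonal lamY * (Vᵀ * W) := by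
      rw [hYeq]
      simp only [Matrix.transpose_mul, Matrix.transpose_transpose, Matrix.mul_assoc]
    have hΦa : Φ a ≤ Φ lamX := by
      have h := conj_le Φ hconv hsym (orth_mul (orth_transpose hU) hW) lamX
      have : a = fun i => ((Uᵀ * W)ᵀ * Matrix.diagonal lamX * (Uᵀ * W)) i i := by
        funext i; rw [ha]; rw [hX']
      rwa [this]
    have hΦb : Φ b ≤ Φ lamY := by
      have h := conj_le Φ hconv hsym (orth_mul (orth_transpose hV) hW) lamY
      have : b = fun i => ((Vᵀ * W)ᵀ * Matrix.diagonal lamY * (Vᵀ * W)) i i := by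
        funext i; rw [hb]; rw [hY']
      rwa [this]
    have hc : Φ (t • a + (1 - t) • b) ≤ t * Φ a + (1 - t) * Φ b := by
      have h := hconv.2 (Set.mem_univ a) (Set.mem_univ b) ht0
        (show (0:ℝ) ≤ 1 - t by linarith) (by ring)
      simpa [smul_eq_mul] using h
    rw [hZab]
    calc Φ (t • a + (1 - t) • b) ≤ t * Φ a + (1 - t) * Φ b := hc
      _ ≤ t * Φ lamX + (1 - t) * Φ lamY :=
          add_le_add (mul_le_mul_of_nonneg_left hΦa ht0)
            (mul_le_mul_of_nonneg_left hΦb (by linarith))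
  · rintro X U hXs hU lamX lamU ⟨-, U₀, hU₀, hXeq⟩ ⟨-, V, hV, hUeq⟩
    have hUU : U * Uᵀ = 1 := mul_eq_one_comm.mp hU
    have h1 : Matrix.diagonal lamU
        = (U₀ᵀ * (U * V))ᵀ * Matrix.diagonal lamX * (U₀ᵀ * (U * V)) := by
      rw [← conj_eq hV hUeq, hXeq]
      simp only [Matrix.transpose_mul, Matrix.transpose_transpose, Matrix.mul_assoc]
    have hle1 : Φ lamU ≤ Φ lamX :=
      conj_le' Φ hconv hsym (orth_mul (orth_transpose hU₀) (orth_mul hU hV)) h1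
    have hX2 : X = U * (V * Matrix.diagonal lamU * Vᵀ) * Uᵀ := by
      rw [← hUeq]
      calc X = (U * Uᵀ) * X * (U * Uᵀ) := by rw [hUU, Matrix.one_mul, Matrix.mul_one]
        _ = U * (Uᵀ * X * U) * Uᵀ := by simp only [Matrix.mul_assoc]
    have h2 : Matrix.diagonal lamX
        = (Vᵀ * (Uᵀ * U₀))ᵀ * Matrix.diagonal lamU * (Vᵀ * (Uᵀ * U₀)) := by
      rw [← conj_eq hU₀ hXeq, hX2]
      simp only [Matrix.transpose_mul, Matrix.transpose_transpose, Matrix.mul_assoc]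
    have hle2 : Φ lamX ≤ Φ lamU :=
      conj_le' Φ hconv hsym (orth_mul (orth_transpose hV) (orth_mul (orth_transpose hU) hU₀)) h2
    exact le_antisymm hle1 hle2
end

section
/- (Theorem 1, subadditivity.) With the weights μ and the functional ψ as in the context, for all compact selfadjoint operators S and T such that S, T and S+T each admit an eigenvalue arrangement, one has ψ(S+T) ≤ ψ(S) + ψ(T). -/
/-- `S` is a compact selfadjoint operator with eigenvalue arrangement
`(lam n)_{n ∈ ℤ \ {0}}`: there is a Hilbert basis `(e_n)` of eigenvectors,
`S e_n = lam n • e_n`, the `lam n` are nonincreasing and nonnegative for `n ≥ 1`,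
and nonincreasing and nonpositive for `n ≤ -1`. -/
def EigArrangement {H : Type*} [NormedAddCommGroup H] [InnerProductSpace ℂ H]
    [CompleteSpace H] (S : H →L[ℂ] H) (lam : {n : ℤ // n ≠ 0} → ℝ) : Prop :=
  IsCompactOperator (⇑S) ∧ IsSelfAdjoint S ∧
    (∃ e : HilbertBasis {n : ℤ // n ≠ 0} ℂ H,
      ∀ m : {n : ℤ // n ≠ 0}, S (e m) = (lam m : ℂ) • e m) ∧
    (∀ n : ℤ, (hn : 1 ≤ n) →
      lam ⟨n + 1, by omega⟩ ≤ lam ⟨n, by omega⟩ ∧ 0 ≤ lam ⟨n, by omega⟩) ∧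
    (∀ n : ℤ, (hn : n ≤ -1) →
      lam ⟨n, by omega⟩ ≤ lam ⟨n - 1, by omega⟩ ∧ lam ⟨n, by omega⟩ ≤ 0)

/-- The weights `μ : ℤ \ {0} → ℝ`: nonincreasing on each side, positive-side weights
dominate negative-side ones, and `∑ |μ_n| < ∞`. -/
def GoodWeights (μ : {n : ℤ // n ≠ 0} → ℝ) : Prop :=
  (∀ n : ℤ, (hn : 1 ≤ n) → μ ⟨n + 1, by omega⟩ ≤ μ ⟨n, by omega⟩) ∧
  (∀ n : ℤ, (hn : n ≤ -1) → μ ⟨n, by omega⟩ ≤ μ ⟨n - 1, by omega⟩) ∧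
  (∀ p m : ℤ, (hp : 1 ≤ p) → (hm : m ≤ -1) → μ ⟨m, by omega⟩ ≤ μ ⟨p, by omega⟩) ∧
  Summable fun n => |μ n|

/-! Let `(f n)` and `(e m)` be eigenbases of `S + T` and `S`. Then
`λ_n(S + T) = ⟪f n, S (f n)⟫ + ⟪f n, T (f n)⟫`, and `⟪f n, S (f n)⟫ = ∑_m |⟪e m, f n⟫|² λ_m(S)` is
an average of the eigenvalues of `S` under the doubly stochastic matrix `(|⟪e m, f n⟫|²)`. So it suffices that `∑ μ_n (D λ)_n ≤ ∑ μ_n λ_n` for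
every doubly stochastic `D`. On the indices `n ≥ 1`, Ky Fan's maximum principle bounds the partial
sums of `D λ` by those of `λ`, and Abel summation against the nonincreasing, nonnegative weights
`μ_n` gives the inequality; the indices `n ≤ -1` are the same statement for `-λ` and `-μ`. -/

open Finset Filter
open scoped InnerProductSpace

theorem Summable.mul_of_abs_le {ι : Type*} {a x : ι → ℝ} {C : ℝ} (ha : Summable a)
    (hx : ∀ i, |x i| ≤ C) : Summable fun i => a i * x i :=
  (ha.abs.mul_right C).of_norm_bounded fun i => by
    rw [Real.norm_eq_abs, abs_mul]
    exact mul_le_mul_of_nonneg_left (hx i) (abs_nonneg _)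

theorem Antitone.sum_range_mul_nonneg {a z : ℕ → ℝ} (ha : Antitone a) (ha0 : ∀ k, 0 ≤ a k)
    (hz : ∀ K, 0 ≤ ∑ k ∈ range K, z k) (N : ℕ) : 0 ≤ ∑ k ∈ range N, a k * z k := by
  have hlast : 0 ≤ a (N - 1) * ∑ k ∈ range N, z k := mul_nonneg (ha0 _) (hz N)
  have hsteps : ∑ i ∈ range (N - 1), (a (i + 1) - a i) * ∑ k ∈ range (i + 1), z k ≤ 0 :=
    sum_nonpos fun i _ => mul_nonpos_of_nonpos_of_nonneg (sub_nonpos.2 (ha i.le_succ)) (hz _)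
  have habel := sum_range_by_parts a z N
  simp only [smul_eq_mul] at habel
  linarith

theorem Antitone.tsum_mul_le_tsum_mul {a x y : ℕ → ℝ} (ha : Antitone a) (ha_sum : Summable a)
    (hx : Summable fun k => a k * x k) (hy : Summable fun k => a k * y k)
    (hxy : ∀ K, ∑ k ∈ range K, x k ≤ ∑ k ∈ range K, y k) :
    ∑' k, a k * x k ≤ ∑' k, a k * y k := by
  have ha0 : ∀ k, 0 ≤ a k := ha.le_of_tendsto ha_sum.tendsto_atTop_zero
  have hpartial := ha.sum_range_mul_nonneg ha0 (z := y - x) fun K => by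
    simpa [sum_sub_distrib] using hxy K
  have hdiff : 0 ≤ ∑' k, (a k * y k - a k * x k) := by
    refine ge_of_tendsto' (hy.sub hx).hasSum.tendsto_sum_nat fun N => ?_
    simpa [mul_sub] using hpartial N
  rw [hy.tsum_sub hx] at hdiff
  linarith

theorem tsum_mul_le_sum_of_hasSum_card {ι : Type*} {c lam : ι → ℝ} {F : Finset ι} {t : ℝ}
    (hc0 : ∀ m, 0 ≤ c m) (hc1 : ∀ m, c m ≤ 1) (hc : HasSum c #F)
    (hcl : Summable fun m => c m * lam m) (hF : ∀ m ∈ F, t ≤ lam m)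
    (hFc : ∀ m ∉ F, lam m ≤ t) :
    ∑' m, c m * lam m ≤ ∑ m ∈ F, lam m := by
  classical
  have hle : ∀ m, c m * lam m ≤ c m * t + if m ∈ F then lam m - t else 0 := by
    intro m
    split_ifs with hm
    · nlinarith [hF m hm, hc1 m]
    · nlinarith [hFc m hm, hc0 m]
  have hsum : HasSum (fun m => c m * t + if m ∈ F then lam m - t else 0)
      (#F * t + ∑ m ∈ F, (lam m - t)) := by
    refine (hc.mul_right t).add ?_
    simpa using hasSum_sum_of_ne_finset_zero (s := F)
      (f := fun m => if m ∈ F then lam m - t else 0) fun m hm => if_neg hm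
  calc ∑' m, c m * lam m ≤ #F * t + ∑ m ∈ F, (lam m - t) := hasSum_le hle hcl.hasSum hsum
    _ = ∑ m ∈ F, lam m := by rw [sum_sub_distrib, sum_const, nsmul_eq_mul]; ring

structure IsDoublyStochastic {ι : Type*} (D : ι → ι → ℝ) : Prop where
  nonneg : ∀ n m, 0 ≤ D n m
  hasSum_row : ∀ n, HasSum (D n) 1
  hasSum_col : ∀ m, HasSum (fun n => D n m) 1

namespace IsDoublyStochastic

variable {ι : Type*} {D : ι → ι → ℝ} {lam r : ι → ℝ} {C : ℝ}

theorem abs_le_of_hasSum (hD : IsDoublyStochastic D) (hC : ∀ m, |lam m| ≤ C) {n : ι} {s : ℝ}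
    (hs : HasSum (fun m => D n m * lam m) s) : |s| ≤ C := by
  have hrow := hD.hasSum_row n
  refine abs_le.2 ⟨?_, ?_⟩
  · simpa using hasSum_le (fun m => mul_le_mul_of_nonneg_left (abs_le.1 (hC m)).1 (hD.nonneg n m))
      (hrow.mul_right (-C)) hs
  · simpa using hasSum_le (fun m => mul_le_mul_of_nonneg_left (abs_le.1 (hC m)).2 (hD.nonneg n m))
      hs (hrow.mul_right C)

/-- Ky Fan's maximum principle: the column weights `∑_{k < K} D (p k) m` lie in `[0, 1]` and
have total mass `K`. -/
theorem sum_range_le (hD : IsDoublyStochastic D) {p : ℕ → ι} (hp : Function.Injective p)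
    (hr : ∀ n, HasSum (fun m => D n m * lam m) (r n)) (hlam : Antitone (lam ∘ p))
    (hout : ∀ m ∉ Set.range p, ∀ k, lam m ≤ lam (p k)) (K : ℕ) :
    ∑ k ∈ range K, r (p k) ≤ ∑ k ∈ range K, lam (p k) := by
  classical
  rcases K with _ | K
  · simp
  set F := (range (K + 1)).map ⟨p, hp⟩
  have hc : HasSum (fun m => ∑ k ∈ range (K + 1), D (p k) m) #F := by
    simpa [F] using hasSum_sum (s := range (K + 1)) fun k _ => hD.hasSum_row (p k)
  have hcr : HasSum (fun m => (∑ k ∈ range (K + 1), D (p k) m) * lam m)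
      (∑ k ∈ range (K + 1), r (p k)) := by
    simpa [sum_mul] using hasSum_sum fun k _ => hr (p k)
  have hc1 : ∀ m, ∑ k ∈ range (K + 1), D (p k) m ≤ 1 := fun m => by
    simpa [F] using sum_le_hasSum F (fun n _ => hD.nonneg n m) (hD.hasSum_col m)
  rw [← hcr.tsum_eq, show ∑ k ∈ range (K + 1), lam (p k) = ∑ m ∈ F, lam m by simp [F]]
  refine tsum_mul_le_sum_of_hasSum_card (t := lam (p K))
    (fun m => sum_nonneg fun k _ => hD.nonneg _ m) hc1 hc hcr.summable ?_ ?_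
  · intro m hm
    obtain ⟨k, hk, rfl⟩ : ∃ k < K + 1, p k = m := by simpa [F] using hm
    exact hlam (by omega : k ≤ K)
  · intro m hm
    by_cases hmp : m ∈ Set.range p
    · obtain ⟨k, rfl⟩ := hmp
      have hk : K + 1 ≤ k := by
        by_contra! hk
        exact hm (mem_map.2 ⟨k, mem_range.2 hk, rfl⟩)
      exact hlam (by omega : K ≤ k)
    · exact hout m hmp K

theorem tsum_comp_mul_le (hD : IsDoublyStochastic D) {p : ℕ → ι} (hp : Function.Injective p)
    (hC : ∀ m, |lam m| ≤ C) (hr : ∀ n, HasSum (fun m => D n m * lam m) (r n))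
    (hlam : Antitone (lam ∘ p)) (hout : ∀ m ∉ Set.range p, ∀ k, lam m ≤ lam (p k))
    {μ : ι → ℝ} (hμ : Antitone (μ ∘ p)) (hμs : Summable (μ ∘ p)) :
    ∑' k, μ (p k) * r (p k) ≤ ∑' k, μ (p k) * lam (p k) :=
  hμ.tsum_mul_le_tsum_mul hμs (hμs.mul_of_abs_le fun k => hD.abs_le_of_hasSum hC (hr (p k)))
    (hμs.mul_of_abs_le fun k => hC (p k)) (hD.sum_range_le hp hr hlam hout)

end IsDoublyStochastic

abbrev NonzeroInt := {n : ℤ // n ≠ 0}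

namespace NonzeroInt

def succ (k : ℕ) : NonzeroInt := ⟨k + 1, by omega⟩

def negSucc (k : ℕ) : NonzeroInt := ⟨-(k + 1), by omega⟩

def sumEquiv : ℕ ⊕ ℕ ≃ NonzeroInt where
  toFun := Sum.elim succ negSucc
  invFun n := if 0 < n.1 then .inl (n.1 - 1).toNat else .inr (-n.1 - 1).toNat
  left_inv := by
    rintro (k | k) <;> simp [succ, negSucc]
  right_inv := by
    rintro ⟨n, hn⟩
    by_cases h : 0 < n <;> simp [h, succ, negSucc]
    omega

@[simp] theorem sumEquiv_inl (k : ℕ) : sumEquiv (.inl k) = succ k := rfl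

@[simp] theorem sumEquiv_inr (k : ℕ) : sumEquiv (.inr k) = negSucc k := rfl

theorem succ_injective : Function.Injective succ :=
  fun _ _ h => by simpa [succ] using h

theorem negSucc_injective : Function.Injective negSucc :=
  fun _ _ h => by simpa [negSucc] using h

theorem tsum_eq {g : NonzeroInt → ℝ} (hg : Summable g) :
    ∑' n, g n = ∑' k, g (succ k) + ∑' k, g (negSucc k) := by
  rw [← sumEquiv.tsum_eq, Summable.tsum_sum] <;>
    simp only [Function.comp_def, sumEquiv_inl, sumEquiv_inr]
  exacts [hg.comp_injective succ_injective, hg.comp_injective negSucc_injective]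

theorem exists_negSucc_of_notMem_range_succ {m : NonzeroInt} (hm : m ∉ Set.range succ) :
    ∃ k, negSucc k = m := by
  obtain ⟨k | k, rfl⟩ := sumEquiv.surjective m
  · exact absurd ⟨k, rfl⟩ hm
  · exact ⟨k, rfl⟩

theorem exists_succ_of_notMem_range_negSucc {m : NonzeroInt} (hm : m ∉ Set.range negSucc) :
    ∃ k, succ k = m := by
  obtain ⟨k | k, rfl⟩ := sumEquiv.surjective m
  · exact ⟨k, rfl⟩
  · exact absurd ⟨k, rfl⟩ hm

theorem antitone_comp_succ {g : NonzeroInt → ℝ}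
    (h : ∀ n : ℤ, (hn : 1 ≤ n) → g ⟨n + 1, by omega⟩ ≤ g ⟨n, by omega⟩) :
    Antitone (g ∘ succ) :=
  antitone_nat_of_succ_le fun k => by simpa [succ, add_assoc] using h (k + 1) (by omega)

theorem monotone_comp_negSucc {g : NonzeroInt → ℝ}
    (h : ∀ n : ℤ, (hn : n ≤ -1) → g ⟨n, by omega⟩ ≤ g ⟨n - 1, by omega⟩) :
    Monotone (g ∘ negSucc) :=
  monotone_nat_of_le_succ fun k => by
    simpa [negSucc, sub_eq_add_neg, add_comm, add_left_comm] using h (-(k + 1)) (by omega)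

end NonzeroInt

open NonzeroInt in
theorem IsDoublyStochastic.tsum_mul_le {D : NonzeroInt → NonzeroInt → ℝ}
    (hD : IsDoublyStochastic D) {μ lam r : NonzeroInt → ℝ} {C : ℝ} (hC : ∀ m, |lam m| ≤ C)
    (hr : ∀ n, HasSum (fun m => D n m * lam m) (r n))
    (hpos : ∀ n : ℤ, (hn : 1 ≤ n) →
      lam ⟨n + 1, by omega⟩ ≤ lam ⟨n, by omega⟩ ∧ 0 ≤ lam ⟨n, by omega⟩)
    (hneg : ∀ n : ℤ, (hn : n ≤ -1) →
      lam ⟨n, by omega⟩ ≤ lam ⟨n - 1, by omega⟩ ∧ lam ⟨n, by omega⟩ ≤ 0)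
    (hμ : GoodWeights μ) :
    ∑' n, μ n * r n ≤ ∑' n, μ n * lam n := by
  obtain ⟨hμpos, hμneg, -, hμs⟩ := hμ
  replace hμs := summable_abs_iff.mp hμs
  have hlam_succ (k : ℕ) : 0 ≤ lam (succ k) := (hpos (k + 1) (by omega)).2
  have hlam_negSucc (k : ℕ) : lam (negSucc k) ≤ 0 := (hneg (-(k + 1)) (by omega)).2
  have hsucc := hD.tsum_comp_mul_le succ_injective hC hr
    (antitone_comp_succ fun n hn => (hpos n hn).1)
    (fun m hm k => by
      obtain ⟨j, rfl⟩ := exists_negSucc_of_notMem_range_succ hm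
      exact (hlam_negSucc j).trans (hlam_succ k))
    (antitone_comp_succ hμpos) (hμs.comp_injective succ_injective)
  have hnegSucc := hD.tsum_comp_mul_le negSucc_injective (μ := -μ) (lam := -lam) (r := -r)
    (by simpa using hC) (fun n => by simpa using (hr n).neg)
    (monotone_comp_negSucc fun n hn => (hneg n hn).1).neg
    (fun m hm k => by
      obtain ⟨j, rfl⟩ := exists_succ_of_notMem_range_negSucc hm
      exact neg_le_neg ((hlam_negSucc k).trans (hlam_succ j)))
    (monotone_comp_negSucc hμneg).neg (hμs.comp_injective negSucc_injective).neg
  simp only [Pi.neg_apply, neg_mul_neg] at hnegSucc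
  rw [tsum_eq (hμs.mul_of_abs_le fun n => hD.abs_le_of_hasSum hC (hr n)),
    tsum_eq (hμs.mul_of_abs_le hC)]
  exact add_le_add hsucc hnegSucc

section EigenBasis

variable {𝕜 ι E : Type*} [RCLike 𝕜] [NormedAddCommGroup E] [InnerProductSpace 𝕜 E]

theorem HilbertBasis.hasSum_norm_inner_sq (b : HilbertBasis ι 𝕜 E) (x : E) :
    HasSum (fun i => ‖⟪b i, x⟫_𝕜‖ ^ 2) (‖x‖ ^ 2) := by
  have h := b.hasSum_inner_mul_inner x x
  simp only [← inner_conj_symm x (b _), RCLike.conj_mul, inner_self_eq_norm_sq_to_K] at h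
  exact_mod_cast h

theorem HilbertBasis.isDoublyStochastic_norm_inner_sq (e f : HilbertBasis ι 𝕜 E) :
    IsDoublyStochastic fun n m => ‖⟪e m, f n⟫_𝕜‖ ^ 2 where
  nonneg _ _ := sq_nonneg _
  hasSum_row n := by simpa [f.orthonormal.1 n] using e.hasSum_norm_inner_sq (f n)
  hasSum_col m := by
    simpa [norm_inner_symm, e.orthonormal.1 m] using f.hasSum_norm_inner_sq (e m)

theorem HilbertBasis.hasSum_re_inner_apply (e : HilbertBasis ι 𝕜 E) {A : E →L[𝕜] E}
    {lam : ι → ℝ} (he : ∀ m, A (e m) = (lam m : 𝕜) • e m) (x : E) :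
    HasSum (fun m => ‖⟪e m, x⟫_𝕜‖ ^ 2 * lam m) (RCLike.re ⟪x, A x⟫_𝕜) := by
  have h := ((e.hasSum_repr x).mapL A).mapL (innerSL 𝕜 x)
  have hterm : ∀ m, innerSL 𝕜 x (A (e.repr x m • e m)) = ((‖⟪e m, x⟫_𝕜‖ ^ 2 * lam m : ℝ) : 𝕜) := by
    intro m
    rw [map_smul, he m, innerSL_apply_apply, inner_smul_right, inner_smul_right, e.repr_apply_apply,
      ← inner_conj_symm x (e m)]
    push_cast
    rw [← RCLike.conj_mul]
    ring
  simp only [hterm] at h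
  simpa using RCLike.hasSum_re 𝕜 h

theorem abs_le_opNorm_of_apply_eq_smul {A : E →L[𝕜] E} {x : E} (hx : ‖x‖ = 1) {c : ℝ}
    (h : A x = (c : 𝕜) • x) : |c| ≤ ‖A‖ := by
  simpa [h, norm_smul, hx] using A.le_opNorm x

theorem re_inner_apply_self_of_apply_eq_smul {A : E →L[𝕜] E} {x : E} (hx : ‖x‖ = 1) {c : ℝ}
    (h : A x = (c : 𝕜) • x) : RCLike.re ⟪x, A x⟫_𝕜 = c := by
  simp [h, inner_smul_right, inner_self_eq_norm_sq_to_K, hx]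

end EigenBasis

theorem psi_subadditive_general {H : Type*} [NormedAddCommGroup H] [InnerProductSpace ℂ H]
    [CompleteSpace H]
    (μ : {n : ℤ // n ≠ 0} → ℝ) (hμ : GoodWeights μ)
    (S T : H →L[ℂ] H) (lamS lamT lamST : {n : ℤ // n ≠ 0} → ℝ)
    (hS : EigArrangement S lamS) (hT : EigArrangement T lamT)
    (hST : EigArrangement (S + T) lamST) :
    ∑' n, μ n * lamST n ≤ (∑' n, μ n * lamS n) + ∑' n, μ n * lamT n := by
  obtain ⟨-, -, ⟨eS, heS⟩, hSpos, hSneg⟩ := hS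
  obtain ⟨-, -, ⟨eT, heT⟩, hTpos, hTneg⟩ := hT
  obtain ⟨-, -, ⟨f, hf⟩, -, -⟩ := hST
  have hsplit (n) : lamST n = RCLike.re ⟪f n, S (f n)⟫_ℂ + RCLike.re ⟪f n, T (f n)⟫_ℂ := by
    rw [← re_inner_apply_self_of_apply_eq_smul (f.orthonormal.1 n) (hf n)]
    simp [inner_add_right]
  have hDS := eS.isDoublyStochastic_norm_inner_sq f
  have hDT := eT.isDoublyStochastic_norm_inner_sq f
  have hCS (m) := abs_le_opNorm_of_apply_eq_smul (eS.orthonormal.1 m) (heS m)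
  have hCT (m) := abs_le_opNorm_of_apply_eq_smul (eT.orthonormal.1 m) (heT m)
  have hrS (n) := eS.hasSum_re_inner_apply heS (f n)
  have hrT (n) := eT.hasSum_re_inner_apply heT (f n)
  have hμs := summable_abs_iff.mp hμ.2.2.2
  calc ∑' n, μ n * lamST n
      = ∑' n, μ n * RCLike.re ⟪f n, S (f n)⟫_ℂ + ∑' n, μ n * RCLike.re ⟪f n, T (f n)⟫_ℂ := by
        simp_rw [hsplit, mul_add]
        exact (hμs.mul_of_abs_le fun n => hDS.abs_le_of_hasSum hCS (hrS n)).tsum_add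
          (hμs.mul_of_abs_le fun n => hDT.abs_le_of_hasSum hCT (hrT n))
    _ ≤ _ := add_le_add (hDS.tsum_mul_le hCS hrS hSpos hSneg hμ)
        (hDT.tsum_mul_le hCT hrT hTpos hTneg hμ)

/-- (Theorem 1, subadditivity.) If `S`, `T`, and `S + T` are compact selfadjoint
operators admitting eigenvalue arrangements, then `ψ(S + T) ≤ ψ(S) + ψ(T)`, where
`ψ(A) = ∑_{n ∈ ℤ \ {0}} μ_n λ_n(A)`. -/
theorem psi_subadditive {H : Type*} [NormedAddCommGroup H] [InnerProductSpace ℂ H]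
    [CompleteSpace H] [TopologicalSpace.SeparableSpace H]
    (hinf : ¬FiniteDimensional ℂ H)
    (μ : {n : ℤ // n ≠ 0} → ℝ) (hμ : GoodWeights μ)
    (S T : H →L[ℂ] H) (lamS lamT lamST : {n : ℤ // n ≠ 0} → ℝ)
    (hS : EigArrangement S lamS) (hT : EigArrangement T lamT)
    (hST : EigArrangement (S + T) lamST) :
    ∑' n, μ n * lamST n ≤ (∑' n, μ n * lamS n) + ∑' n, μ n * lamT n :=
  psi_subadditive_general μ hμ S T lamS lamT lamST hS hT hST
end
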